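/- Let f ∈ O and let g ∈ (f) + J(f). If r, r₁, …, rₙ ∈ O satisfy the relation r·f + Σ_{k=1}^{n} r_k·∂f/∂x_k = 0, then r·g + Σ_{k=1}^{n} r_k·∂g/∂x_k ∈ (f) + J(f). (This is the key computation showing that every syzygy of (f, ∂f/∂x₁, …, ∂f/∂xₙ) lifts to a syzygy of (f+εg, ∂(f+εg)/∂x₁, …, ∂(f+εg)/∂xₙ) over the dual numbers.) -/

import Mathlib

/-!
Put `δ := ∑ k, r_k • ∂_k` and `L h := r * h + δ h`, and let `I := (f) + J(f)`.
By the Leibniz rule `L (c * h) = c * L h + δ c * h`, so the elements `h ∈ I` with `L h ∈ I`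
form an ideal, and it suffices to check the generators. For `f` this is the relation `L f = 0`.
Differentiating that relation along `∂_i` gives `L (∂_i f) = -∂_i r * f - ⁅∂_i, δ⁆ f`, and since
partial derivatives commute, `⁅∂_i, δ⁆ = ∑ k, ∂_i r_k • ∂_k` maps `f` into `J(f)`.
-/

/-- Formal partial derivative of a multivariate power series with respect to variable `i`. -/
noncomputable def pd {n : ℕ} {R : Type*} [CommSemiring R] (i : Fin n)
    (f : MvPowerSeries (Fin n) R) : MvPowerSeries (Fin n) R :=
  fun m => (m i + 1) • f (m + Finsupp.single i 1)

/-- The Jacobian ideal `J(f) = (∂f/∂x₁, …, ∂f/∂xₙ)` of `f ∈ ℂ[[x₁,…,xₙ]]`. -/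
noncomputable def jacIdeal {n : ℕ} (f : MvPowerSeries (Fin n) ℂ) :
    Ideal (MvPowerSeries (Fin n) ℂ) :=
  Ideal.span (Set.range fun i : Fin n => pd i f)

open Ideal

namespace Derivation

variable {R A : Type*} [CommRing R] [CommRing A] [Algebra R A]

theorem mul_mul_add_apply_mul (δ : Derivation R A A) (r c h : A) :
    r * (c * h) + δ (c * h) = c * (r * h + δ h) + δ c * h := by
  rw [leibniz, smul_eq_mul, smul_eq_mul]
  ring

variable {ι : Type*} (D : ι → Derivation R A A)

theorem mul_add_apply_mem_of_commutator_mem {δ : Derivation R A A} {f r : A}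
    (hcomm : ∀ i, ⁅D i, δ⁆ f ∈ span (Set.range fun k => D k f))
    (hrel : r * f + δ f = 0) {g : A}
    (hg : g ∈ span {f} + span (Set.range fun k => D k f)) :
    r * g + δ g ∈ span {f} + span (Set.range fun k => D k f) := by
  rw [Submodule.add_eq_sup, ← Submodule.span_union] at hg ⊢
  set I := span ({f} ∪ Set.range fun k => D k f)
  have hf : ∀ c, c * f ∈ I := fun c => mul_mem_left _ c (subset_span (.inl rfl))
  induction hg using Submodule.span_induction with
  | mem h hgen =>
    rcases hgen with rfl | ⟨i, rfl⟩
    · rw [hrel]; exact I.zero_mem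
    · have hDi : r * D i f + δ (D i f) = -(D i r * f) - ⁅D i, δ⁆ f := by
        have := congrArg (D i) hrel
        rw [map_add, leibniz, map_zero, ← sub_add_cancel (D i (δ f)) (δ (D i f)),
          ← commutator_apply, smul_eq_mul, smul_eq_mul] at this
        linear_combination this
      rw [hDi]
      exact I.sub_mem (I.neg_mem (hf _)) (span_mono Set.subset_union_right (hcomm i))
  | zero => simp
  | add x y _ _ hx hy =>
    rw [map_add, mul_add, add_add_add_comm]; exact I.add_mem hx hy
  | smul c h hI hLh =>
    rw [smul_eq_mul, mul_mul_add_apply_mul]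
    exact I.add_mem (mul_mem_left _ c hLh) (mul_mem_left _ _ hI)

theorem sum_smul_apply (s : Finset ι) (rr : ι → A) (h : A) :
    (∑ k ∈ s, rr k • D k) h = ∑ k ∈ s, rr k * D k h := by
  rw [← coeFnAddMonoidHom_apply, map_sum, Finset.sum_apply]
  simp only [coeFnAddMonoidHom_apply, smul_apply, smul_eq_mul]

theorem commutator_sum_smul_apply (hD : ∀ i j a, D i (D j a) = D j (D i a))
    (s : Finset ι) (rr : ι → A) (i : ι) (f : A) :
    ⁅D i, ∑ k ∈ s, rr k • D k⁆ f = ∑ k ∈ s, D i (rr k) * D k f := by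
  simp only [commutator_apply, sum_smul_apply, map_sum, leibniz, hD i, smul_eq_mul,
    ← Finset.sum_sub_distrib]
  refine Finset.sum_congr rfl fun k _ => ?_
  ring

theorem syzygy_mem_of_mem [Fintype ι] (hD : ∀ i j a, D i (D j a) = D j (D i a))
    {f g r : A} {rr : ι → A}
    (hg : g ∈ span {f} + span (Set.range fun k => D k f))
    (hrel : r * f + ∑ k, rr k * D k f = 0) :
    r * g + ∑ k, rr k * D k g ∈ span {f} + span (Set.range fun k => D k f) := by
  simp only [← sum_smul_apply] at hrel ⊢
  refine mul_add_apply_mem_of_commutator_mem D (fun i => ?_) hrel hg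
  rw [commutator_sum_smul_apply D hD]
  exact sum_mem fun k _ => mul_mem_left _ _ (subset_span ⟨k, rfl⟩)

end Derivation

namespace MvPowerSeries

variable {σ R : Type*} [CommSemiring R]

theorem pderiv_comm (i j : σ) (f : MvPowerSeries σ R) :
    pderiv R i (pderiv R j f) = pderiv R j (pderiv R i f) := by
  classical
  ext m
  simp only [coeff_pderiv, Finsupp.add_apply, Finsupp.single_apply, add_right_comm m]
  rcases eq_or_ne i j with rfl | hij
  · rfl
  · simp only [if_neg hij, if_neg hij.symm, add_zero]
    ring

end MvPowerSeries

theorem pd_eq_pderiv {n : ℕ} {R : Type*} [CommSemiring R] (i : Fin n)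
    (f : MvPowerSeries (Fin n) R) : pd i f = MvPowerSeries.pderiv R i f := by
  ext m
  rw [MvPowerSeries.coeff_pderiv, ← Nat.cast_succ, ← nsmul_eq_mul']
  rfl

theorem syzygy_lifts_general (n : ℕ)
    (f g : MvPowerSeries (Fin n) ℂ)
    (hg : g ∈ Ideal.span {f} + jacIdeal f)
    (r : MvPowerSeries (Fin n) ℂ) (rr : Fin n → MvPowerSeries (Fin n) ℂ)
    (hrel : r * f + ∑ k : Fin n, rr k * pd k f = 0) :
    r * g + ∑ k : Fin n, rr k * pd k g ∈ Ideal.span {f} + jacIdeal f := by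
  simp only [jacIdeal, pd_eq_pderiv] at hg hrel ⊢
  exact Derivation.syzygy_mem_of_mem _ MvPowerSeries.pderiv_comm hg hrel

/-- if `g ∈ (f) + J(f)` and `r·f + Σ r_k·∂f/∂x_k = 0` is a relation among
`f, ∂f/∂x₁, …, ∂f/∂xₙ`, then `r·g + Σ r_k·∂g/∂x_k ∈ (f) + J(f)`. -/
theorem syzygy_lifts (n : ℕ) (hn : 1 ≤ n)
    (f g : MvPowerSeries (Fin n) ℂ)
    (hg : g ∈ Ideal.span {f} + jacIdeal f)
    (r : MvPowerSeries (Fin n) ℂ) (rr : Fin n → MvPowerSeries (Fin n) ℂ)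
    (hrel : r * f + ∑ k : Fin n, rr k * pd k f = 0) :
    r * g + ∑ k : Fin n, rr k * pd k g ∈ Ideal.span {f} + jacIdeal f :=
  syzygy_lifts_general n f g hg r rr hrel
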